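/- arXiv:1707.02098 — 2 statements merged into one kernel-verified Lean document; each statement's English description precedes it below -/
import Mathlib

section
/- In a topos, given two monic spans of cospans that are horizontally composable (sharing a common foot cospan from z, with both inner spans having monic legs), the horizontally composed span of cospans—formed by pushouts over z of the corresponding apex, middle, and bottom objects—again has monic legs. -/
/-!
The induced map `y' +_z w' ⟶ y +_z w` factors as `y' +_z w' ⟶ y +_z w' ⟶ y +_z w`, each factor
changing one leg only. By pasting of pushout squares, the factor changing the leg `y' ↣ y` is the
pushout of that mono along the coprojection `y' ⟶ y' +_z w'` (and symmetrically for the other), so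
it is mono because pushouts preserve monos in an adhesive category, in particular in a topos.
-/

open CategoryTheory CategoryTheory.Limits

universe u v

namespace CategoryTheory.Adhesive

variable {C : Type u} [Category.{v} C] [Adhesive C]

theorem mono_of_isPushout_of_isPushout_comp {Z X X' Y P P' : C}
    {a : Z ⟶ X} {b : Z ⟶ Y} {i : X ⟶ P} {j : Y ⟶ P} {μ : X ⟶ X'} {i' : X' ⟶ P'} {j' : Y ⟶ P'}
    [Mono μ] (hP : IsPushout a b i j) (hP' : IsPushout (a ≫ μ) b i' j')
    {m : P ⟶ P'} (hi : i ≫ m = μ ≫ i') (hj : j ≫ m = j') : Mono m :=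
  mono_of_isPushout_of_mono_left (IsPushout.of_left (hj ▸ hP') hi.symm hP)

variable [HasPushouts C]

theorem mono_pushout_map_left {Z X X' Y : C} (a : Z ⟶ X) (b : Z ⟶ Y) (μ : X ⟶ X') [Mono μ] :
    Mono (pushout.map a b (a ≫ μ) b μ (𝟙 Y) (𝟙 Z) (by simp) (by simp)) :=
  mono_of_isPushout_of_isPushout_comp (IsPushout.of_hasPushout a b)
    (IsPushout.of_hasPushout (a ≫ μ) b)
    (pushout.inl_desc _ _ _) ((pushout.inr_desc _ _ _).trans (Category.id_comp _))

theorem mono_pushout_map_right {Z X Y Y' : C} (a : Z ⟶ X) (b : Z ⟶ Y) (κ : Y ⟶ Y') [Mono κ] :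
    Mono (pushout.map a b a (b ≫ κ) (𝟙 X) κ (𝟙 Z) (by simp) (by simp)) :=
  mono_of_isPushout_of_isPushout_comp (IsPushout.of_hasPushout a b).flip
    (IsPushout.of_hasPushout a (b ≫ κ)).flip
    (pushout.inr_desc _ _ _) ((pushout.inl_desc _ _ _).trans (Category.id_comp _))

theorem mono_pushout_map {Z X X' Y Y' : C} (a : Z ⟶ X) (b : Z ⟶ Y) (μ : X ⟶ X') (κ : Y ⟶ Y')
    [Mono μ] [Mono κ] :
    Mono (pushout.map a b (a ≫ μ) (b ≫ κ) μ κ (𝟙 Z) (by simp) (by simp)) := by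
  simpa only [pushout.map_comp, Category.comp_id, Category.id_comp] using
    mono_comp' (mono_pushout_map_left a b μ) (mono_pushout_map_right (a ≫ μ) b κ)

end CategoryTheory.Adhesive

/-- In a topos (adhesive category), the horizontal (pushout)
composite of two composable monic spans of cospans again has monic legs. -/
theorem stmt5 {C : Type u} [Category.{v} C] [Adhesive C] [HasPushouts C]
    {y y' y'' z w w' w'' v : C}
    (oz : z ⟶ y) (oz' : z ⟶ y') (oz'' : z ⟶ y'')
    (iw : z ⟶ w) (iw' : z ⟶ w') (iw'' : z ⟶ w'')
    (μ : y' ⟶ y) (ν : y' ⟶ y'') (κ : w' ⟶ w) (lam : w' ⟶ w'')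
    [Mono μ] [Mono ν] [Mono κ] [Mono lam]
    (h3 : oz' ≫ μ = oz) (h4 : oz' ≫ ν = oz'')
    (h5 : iw' ≫ κ = iw) (h6 : iw' ≫ lam = iw'') :
    Mono (pushout.map oz' iw' oz iw μ κ (𝟙 z) (by simp [h3]) (by simp [h5])) ∧
    Mono (pushout.map oz' iw' oz'' iw'' ν lam (𝟙 z) (by simp [h4]) (by simp [h6])) := by
  subst h3 h4 h5 h6
  exact ⟨Adhesive.mono_pushout_map oz' iw' μ κ, Adhesive.mono_pushout_map oz' iw' ν lam⟩
end

section
/- In a category with pullbacks, given two monic spans of cospans that are vertically composable (the bottom cospan of the first equals the top cospan of the second), the vertical composite formed by pulling back the middle objects y' and y'' over the common cospan apex y yields a span of cospans whose inner span legs are again monomorphisms. -/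
open CategoryTheory CategoryTheory.Limits

universe u v

/-- In a category with pullbacks, the vertical composite of two
monic spans of cospans (formed by pulling back the middle objects over the
common cospan) again has monic inner span legs. -/
theorem stmt6 {C : Type u} [Category.{v} C] [HasPullbacks C]
    {l y r y' y'' : C} (f : y' ⟶ y) (g : y'' ⟶ y) (m : y' ⟶ l) (n : y'' ⟶ r)
    [Mono f] [Mono g] [Mono m] [Mono n] :
    Mono (pullback.fst f g ≫ m) ∧ Mono (pullback.snd f g ≫ n) := by
  constructor <;> exact mono_comp _ _
end
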